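/- Let ψ : ℝ → ℝ be a continuously differentiable, positive, even function with ψ(0) = 1 such that x ↦ |ψ(x)| + (1 + |x|)·|ψ′(x)| is integrable on ℝ, let 0 < α ≤ 1, and let μ be a Borel probability measure on ℝ with d_μ^{α,∞} < ∞. Then for all x ∈ ℝ and a > 0, a^{−α}·(ψ_a * μ)(x) ≤ d_μ^{α,∞} · ∫₀^∞ |ψ′(y)|·(2y)^α dy. -/

import Mathlib

open MeasureTheory Complex Set

/-- `d_μ^{α,∞} = sup_{x ∈ ℝ} sup_{ε > 0} μ((x−ε, x+ε))/(2ε)^α`. -/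
noncomputable def dAlpha (μ : Measure ℝ) (α : ℝ) : ENNReal :=
  ⨆ (x : ℝ) (ε : ℝ) (_ : 0 < ε),
    μ (Set.Ioo (x - ε) (x + ε)) / ENNReal.ofReal ((2 * ε) ^ α)

/-- `(ψ_a * μ)(x) = ∫ ψ((y − x)/a) dμ(y)`. -/
noncomputable def waveletConv (ψ : ℝ → ℝ) (a : ℝ) (μ : Measure ℝ) (x : ℝ) : ℝ :=
  ∫ y : ℝ, ψ ((y - x) / a) ∂μ

/-!
Since `ψ` and `ψ'` are integrable, `ψ` vanishes at infinity, so `ψ u = -∫_u^∞ ψ'`; as `ψ` is even,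
`ψ u ≤ ∫_{|u|}^∞ |ψ'|`. Integrating this against `μ` and exchanging the integrals (Tonelli) bounds
`(ψ_a * μ)(x)` by `∫_0^∞ |ψ'(t)| μ((x - a t, x + a t)) dt`, and the Hölder bound
`μ((x - a t, x + a t)) ≤ d_μ^{α,∞} (2 a t)^α` produces the factor `a^α`.
-/

open scoped ENNReal

lemma rpow_le_one_add {x α : ℝ} (hx : 0 ≤ x) (hα0 : 0 ≤ α) (hα1 : α ≤ 1) : x ^ α ≤ 1 + x := by
  have := rpow_one_add_le_one_add_mul_self (s := x - 1) (by linarith) hα0 hα1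
  rw [add_sub_cancel] at this
  nlinarith

lemma integrableOn_mul_two_mul_rpow_Ioi {g : ℝ → ℝ} {α : ℝ}
    (hg : Integrable fun x => (1 + |x|) * g x) (hgm : AEStronglyMeasurable g)
    (hα0 : 0 ≤ α) (hα1 : α ≤ 1) :
    IntegrableOn (fun t => g t * (2 * t) ^ α) (Ioi 0) := by
  refine (hg.norm.const_mul 2).integrableOn.mono'
    (hgm.mul ((measurable_const.mul measurable_id).pow_const α).aestronglyMeasurable).restrict
    ((ae_restrict_iff' measurableSet_Ioi).2 (ae_of_all _ fun t (ht : 0 < t) => ?_))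
  have hpow := rpow_le_one_add (x := 2 * t) (by positivity) hα0 hα1
  rw [norm_mul, norm_mul, Real.norm_of_nonneg (by positivity : 0 ≤ (2 * t) ^ α),
    Real.norm_of_nonneg (by positivity : 0 ≤ 1 + |t|), abs_of_pos ht]
  nlinarith [norm_nonneg (g t)]

lemma abs_le_integral_Ioi_abs_of_hasDerivAt {f f' : ℝ → ℝ} {u : ℝ}
    (hderiv : ∀ t ∈ Ici u, HasDerivAt f (f' t) t) (hf' : IntegrableOn f' (Ioi u))
    (hf : IntegrableOn f (Ioi u)) :
    |f u| ≤ ∫ t in Ioi u, |f' t| := by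
  have hlim := tendsto_zero_of_hasDerivAt_of_integrableOn_Ioi
    (fun t (ht : u < t) => hderiv t ht.le) hf' hf
  have hftc := integral_Ioi_of_hasDerivAt_of_tendsto' hderiv hf' hlim
  rw [zero_sub] at hftc
  rw [← abs_neg, ← hftc]
  exact abs_integral_le_integral_abs

lemma measure_Ioo_le_dAlpha_mul (μ : Measure ℝ) (α x : ℝ) {ε : ℝ} (hε : 0 < ε) :
    μ (Ioo (x - ε) (x + ε)) ≤ dAlpha μ α * ENNReal.ofReal ((2 * ε) ^ α) := by
  have hpos : ENNReal.ofReal ((2 * ε) ^ α) ≠ 0 := by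
    rw [ne_eq, ENNReal.ofReal_eq_zero, not_le]; positivity
  exact (ENNReal.div_le_iff hpos ENNReal.ofReal_ne_top).1 <|
    le_iSup_of_le x <| le_iSup_of_le ε <| le_iSup_of_le hε le_rfl

lemma lintegral_lintegral_Ioi_abs_sub_div (μ : Measure ℝ) [SFinite μ] {G : ℝ → ℝ≥0∞}
    (hG : Measurable G) (x : ℝ) {a : ℝ} (ha : 0 < a) :
    ∫⁻ y, (∫⁻ t in Ioi (|y - x| / a), G t) ∂μ =
      ∫⁻ t in Ioi 0, μ (Ioo (x - a * t) (x + a * t)) * G t := by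
  set S : Set (ℝ × ℝ) := {p | |p.1 - x| < a * p.2}
  have hS : MeasurableSet S :=
    measurableSet_lt (measurable_fst.sub measurable_const).abs (measurable_snd.const_mul a)
  have hslice : ∀ y, (Ioi (|y - x| / a)).indicator G = fun t => S.indicator (G ·.2) (y, t) :=
    fun y => funext fun t => by
      simp only [indicator_apply, mem_Ioi, div_lt_iff₀ ha, mul_comm a, S, mem_ofPred_eq]
  have hsection : ∀ t, (fun y => (y, t)) ⁻¹' S = Ioo (x - a * t) (x + a * t) := fun t => by
    ext y
    simp only [mem_preimage, S, mem_ofPred_eq, abs_sub_lt_iff, mem_Ioo]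
    constructor <;> rintro ⟨h1, h2⟩ <;> constructor <;> linarith
  calc ∫⁻ y, (∫⁻ t in Ioi (|y - x| / a), G t) ∂μ
      = ∫⁻ y, (∫⁻ t in Ioi 0, S.indicator (G ·.2) (y, t)) ∂μ := by
        refine lintegral_congr fun y => ?_
        rw [← hslice, lintegral_indicator measurableSet_Ioi,
          Measure.restrict_restrict measurableSet_Ioi, Ioi_inter_Ioi,
          sup_eq_left.2 (by positivity)]
    _ = ∫⁻ t in Ioi 0, ∫⁻ y, S.indicator (G ·.2) (y, t) ∂μ :=
        lintegral_lintegral_swap (μ := μ) (ν := volume.restrict (Ioi (0 : ℝ)))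
          ((hG.comp measurable_snd).indicator hS).aemeasurable
    _ = ∫⁻ t in Ioi 0, μ (Ioo (x - a * t) (x + a * t)) * G t := by
        refine lintegral_congr fun t => ?_
        rw [← hsection, mul_comm, ← lintegral_indicator_const (measurable_prodMk_right hS)]
        rfl

lemma lintegral_comp_div_le_dAlpha_mul (μ : Measure ℝ) [SFinite μ] (α : ℝ) {φ G : ℝ → ℝ≥0∞}
    (hG : Measurable G) (hφ : ∀ u, φ u ≤ ∫⁻ t in Ioi |u|, G t) (x : ℝ) {a : ℝ} (ha : 0 < a) :
    ∫⁻ y, φ ((y - x) / a) ∂μ ≤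
      dAlpha μ α * ENNReal.ofReal (a ^ α) * ∫⁻ t in Ioi 0, G t * ENNReal.ofReal ((2 * t) ^ α) := by
  have hscale : ∀ t ∈ Ioi (0 : ℝ), ENNReal.ofReal ((2 * (a * t)) ^ α) =
      ENNReal.ofReal (a ^ α) * ENNReal.ofReal ((2 * t) ^ α) := fun t (ht : 0 < t) => by
    rw [mul_left_comm, Real.mul_rpow ha.le (by positivity), ENNReal.ofReal_mul (by positivity)]
  calc ∫⁻ y, φ ((y - x) / a) ∂μ
      ≤ ∫⁻ y, (∫⁻ t in Ioi (|y - x| / a), G t) ∂μ := lintegral_mono fun y => by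
        simpa only [abs_div, abs_of_pos ha] using hφ ((y - x) / a)
    _ = ∫⁻ t in Ioi 0, μ (Ioo (x - a * t) (x + a * t)) * G t :=
        lintegral_lintegral_Ioi_abs_sub_div μ hG x ha
    _ ≤ ∫⁻ t in Ioi 0, dAlpha μ α * ENNReal.ofReal ((2 * (a * t)) ^ α) * G t :=
        setLIntegral_mono' measurableSet_Ioi fun t (ht : 0 < t) => by
          gcongr; exact measure_Ioo_le_dAlpha_mul μ α x (mul_pos ha ht)
    _ = ∫⁻ t in Ioi 0, dAlpha μ α * ENNReal.ofReal (a ^ α) *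
          (G t * ENNReal.ofReal ((2 * t) ^ α)) :=
        setLIntegral_congr_fun measurableSet_Ioi fun t ht => by rw [hscale t ht]; ring
    _ = _ := lintegral_const_mul _ <|
        hG.mul ((measurable_const.mul measurable_id).pow_const α).ennreal_ofReal

lemma waveletConv_le_of_le_integral_Ioi (μ : Measure ℝ) [SFinite μ] {α : ℝ}
    (hμ : dAlpha μ α ≠ ⊤) {ψ g : ℝ → ℝ} (hψ : Continuous ψ) (hψ_nonneg : ∀ u, 0 ≤ ψ u)
    (hg : Measurable g) (hg_nonneg : ∀ t, 0 ≤ g t) (hg_int : Integrable g)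
    (hψg : ∀ u, ψ u ≤ ∫ t in Ioi |u|, g t)
    (hgα : IntegrableOn (fun t => g t * (2 * t) ^ α) (Ioi 0)) (x : ℝ) {a : ℝ} (ha : 0 < a) :
    a ^ (-α) * waveletConv ψ a μ x ≤ (dAlpha μ α).toReal * ∫ t in Ioi 0, g t * (2 * t) ^ α := by
  have htail : ∀ u, ENNReal.ofReal (ψ u) ≤ ∫⁻ t in Ioi |u|, ENNReal.ofReal (g t) := fun u => by
    rw [← ofReal_integral_eq_lintegral_ofReal hg_int.integrableOn (ae_of_all _ hg_nonneg)]
    exact ENNReal.ofReal_le_ofReal (hψg u)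
  have hbound := lintegral_comp_div_le_dAlpha_mul μ α hg.ennreal_ofReal htail x ha
  simp_rw [← ENNReal.ofReal_mul (hg_nonneg _)] at hbound
  rw [← ofReal_integral_eq_lintegral_ofReal hgα ((ae_restrict_iff' measurableSet_Ioi).2
    (ae_of_all _ fun t (ht : 0 < t) => mul_nonneg (hg_nonneg t) (by positivity)))] at hbound
  have hwavelet : waveletConv ψ a μ x = (∫⁻ y, ENNReal.ofReal (ψ ((y - x) / a)) ∂μ).toReal :=
    integral_eq_lintegral_of_nonneg_ae (ae_of_all _ fun _ => hψ_nonneg _)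
      (hψ.comp (by fun_prop)).aestronglyMeasurable
  have hI : 0 ≤ ∫ t in Ioi 0, g t * (2 * t) ^ α :=
    setIntegral_nonneg measurableSet_Ioi fun t (ht : 0 < t) =>
      mul_nonneg (hg_nonneg t) (by positivity)
  calc a ^ (-α) * waveletConv ψ a μ x
      ≤ a ^ (-α) * (dAlpha μ α * ENNReal.ofReal (a ^ α) *
          ENNReal.ofReal (∫ t in Ioi 0, g t * (2 * t) ^ α)).toReal := by
        rw [hwavelet]
        exact mul_le_mul_of_nonneg_left (ENNReal.toReal_mono (by finiteness) hbound)
          (by positivity)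
    _ = _ := by
        rw [ENNReal.toReal_mul, ENNReal.toReal_mul, ENNReal.toReal_ofReal (by positivity),
          ENNReal.toReal_ofReal hI, Real.rpow_neg ha.le]
        field_simp

theorem stmt9_general (ψ : ℝ → ℝ) (hψC1 : ContDiff ℝ 1 ψ) (hψpos : ∀ x, 0 < ψ x)
    (hψeven : ∀ x, ψ (-x) = ψ x)
    (hψint : MeasureTheory.Integrable (fun x => |ψ x| + (1 + |x|) * |deriv ψ x|))
    (α : ℝ) (hα0 : 0 < α) (hα1 : α ≤ 1)
    (μ : Measure ℝ) [IsProbabilityMeasure μ] (hμ : dAlpha μ α ≠ ⊤)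
    (x : ℝ) (a : ℝ) (ha : 0 < a) :
    a ^ (-α) * waveletConv ψ a μ x ≤
      (dAlpha μ α).toReal * ∫ y in Set.Ioi (0 : ℝ), |deriv ψ y| * (2 * y) ^ α := by
  have hψ_int : Integrable ψ := hψint.mono' hψC1.continuous.aestronglyMeasurable
    (ae_of_all _ fun t => le_add_of_nonneg_right (by positivity))
  have hweight : Integrable fun t => (1 + |t|) * |deriv ψ t| := by
    simpa [Pi.sub_def] using hψint.sub hψ_int.abs
  have hderiv_int : Integrable (deriv ψ) := hweight.mono' (measurable_deriv ψ).aestronglyMeasurable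
    (ae_of_all _ fun t => le_mul_of_one_le_left (abs_nonneg _) (by simp))
  have htail : ∀ u, ψ u ≤ ∫ t in Ioi |u|, |deriv ψ t| := fun u => by
    have heven : ψ u = ψ |u| := by rcases abs_choice u with h | h <;> simp [h, hψeven]
    exact heven ▸ (le_abs_self _).trans (abs_le_integral_Ioi_abs_of_hasDerivAt
      (fun t _ => (hψC1.differentiable one_ne_zero t).hasDerivAt)
      hderiv_int.integrableOn hψ_int.integrableOn)
  exact waveletConv_le_of_le_integral_Ioi μ hμ hψC1.continuous (fun u => (hψpos u).le)
    (measurable_deriv ψ).abs (fun _ => abs_nonneg _) hderiv_int.abs htail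
    (integrableOn_mul_two_mul_rpow_Ioi hweight (measurable_deriv ψ).abs.aestronglyMeasurable
      hα0.le hα1) x ha

theorem stmt9 (ψ : ℝ → ℝ) (hψC1 : ContDiff ℝ 1 ψ) (hψpos : ∀ x, 0 < ψ x)
    (hψeven : ∀ x, ψ (-x) = ψ x) (hψ0 : ψ 0 = 1)
    (hψint : MeasureTheory.Integrable (fun x => |ψ x| + (1 + |x|) * |deriv ψ x|))
    (α : ℝ) (hα0 : 0 < α) (hα1 : α ≤ 1)
    (μ : Measure ℝ) [IsProbabilityMeasure μ] (hμ : dAlpha μ α ≠ ⊤)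
    (x : ℝ) (a : ℝ) (ha : 0 < a) :
    a ^ (-α) * waveletConv ψ a μ x ≤
      (dAlpha μ α).toReal * ∫ y in Set.Ioi (0 : ℝ), |deriv ψ y| * (2 * y) ^ α :=
  stmt9_general ψ hψC1 hψpos hψeven hψint α hα0 hα1 μ hμ x a ha
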